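/- Define ρ_{d,s,n} as the infimum of ρ ≥ 0 such that there exists a polynomial p of degree ≤ n, not identically zero, with f(x) = p(2π|x|²)e^{-π|x|²} satisfying f̂ = s f, f(0) = 0, and f(x) ≥ 0 for |x| ≥ ρ. Then for each fixed s ∈ {+1, -1}, every d ≥ some d₀, and n = 3, one has ρ_{d,s,3} ≤ (1 + o(1))√(d/(2π)) as d → ∞. -/

import Mathlib

open MeasureTheory Real Polynomial FourierTransform Filter

/-- The optimal last-sign-change radius in the eigenfunction problem restricted to
functions of the form `p(2π|x|²) e^{-π|x|²}` with `deg p ≤ n`, on `ℝ^d`,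
for the Fourier eigenvalue `s`. -/
noncomputable def rhoOpt (d n : ℕ) (s : ℝ) : ℝ :=
  sInf {ρ : ℝ | 0 ≤ ρ ∧ ∃ p : Polynomial ℝ, p ≠ 0 ∧ p.natDegree ≤ n ∧
    (∀ y : EuclideanSpace ℝ (Fin d),
      𝓕 (fun x : EuclideanSpace ℝ (Fin d) =>
          ((p.eval (2 * π * ‖x‖ ^ 2) * Real.exp (-π * ‖x‖ ^ 2) : ℝ) : ℂ)) y =
        (s : ℂ) * ((p.eval (2 * π * ‖y‖ ^ 2) * Real.exp (-π * ‖y‖ ^ 2) : ℝ) : ℂ)) ∧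
    p.eval 0 = 0 ∧
    ∀ x : EuclideanSpace ℝ (Fin d), ρ ≤ ‖x‖ → 0 ≤ p.eval (2 * π * ‖x‖ ^ 2)}

open MeasureTheory Real Polynomial FourierTransform Filter Topology
open scoped RealInnerProductSpace

noncomputable section

namespace D3UB

variable {d : ℕ}

local notation "Vd" => EuclideanSpace ℝ (Fin d)

-- simple fact: v^m ≤ m^m * exp v for v ≥ 0
lemma pow_le_pow_mul_exp (m : ℕ) {v : ℝ} (hv : 0 ≤ v) : v ^ m ≤ (m : ℝ) ^ m * rexp v := by
  rcases Nat.eq_zero_or_pos m with hm | hm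
  · simpa [hm] using (Real.one_le_exp hv)
  · have hmpos : (0:ℝ) < m := by exact_mod_cast hm
    have h1 : v / m ≤ rexp (v / m) := by
      nlinarith [Real.add_one_le_exp (v / (m:ℝ))]
    have h2 : (v / m) ^ m ≤ (rexp (v / m)) ^ m :=
      pow_le_pow_left₀ (by positivity) h1 m
    have h3 : (rexp (v / m)) ^ m = rexp v := by
      rw [← Real.exp_nat_mul]
      congr 1
      field_simp
    calc v ^ m = (m:ℝ) ^ m * (v / m) ^ m := by
          rw [div_pow]; field_simp
      _ ≤ (m:ℝ) ^ m * rexp v := by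
          rw [← h3]; exact mul_le_mul_of_nonneg_left h2 (by positivity)

lemma integrable_gauss {t : ℝ} (ht : 0 < t) :
    Integrable (fun x : Vd => rexp (-t * ‖x‖ ^ 2)) := by
  have hb : 0 < ((t:ℂ)).re := by simpa using ht
  have := (GaussianFourier.integrable_cexp_neg_mul_sq_norm_add (V := Vd) hb 0 0).norm
  refine this.congr ?_
  filter_upwards with x
  simp [Complex.norm_exp, ← Complex.ofReal_pow, neg_mul]

lemma integrable_pow_gauss (m : ℕ) {t : ℝ} (ht : 0 < t) :
    Integrable (fun x : Vd => ‖x‖ ^ m * rexp (-t * ‖x‖ ^ 2)) := by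
  have hg := (integrable_gauss (d := d) (half_pos ht)).const_mul
      ((1 : ℝ) + (m:ℝ) ^ m * (2 / t) ^ m)
  refine hg.mono' ?_ ?_
  · exact ((continuous_norm.pow m).mul
      ((continuous_const.mul (continuous_norm.pow 2)).rexp)).aestronglyMeasurable
  · filter_upwards with x
    have hu : (0:ℝ) ≤ ‖x‖ := norm_nonneg x
    have key : ‖x‖ ^ m ≤ (1 + (m:ℝ) ^ m * (2 / t) ^ m) * rexp (t / 2 * ‖x‖ ^ 2) := by
      have h1 : ‖x‖ ^ m ≤ 1 + (‖x‖ ^ 2) ^ m := by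
        rcases le_total ‖x‖ 1 with h | h
        · have : ‖x‖ ^ m ≤ 1 := pow_le_one₀ hu h
          nlinarith [pow_nonneg (pow_nonneg hu 2) m]
        · have h2 : ‖x‖ ^ m ≤ (‖x‖ ^ 2) ^ m := by
            rw [← pow_mul]
            exact pow_le_pow_right₀ h (Nat.le_mul_of_pos_left m (by norm_num))
          nlinarith
      have h2 : (‖x‖ ^ 2) ^ m ≤ (m:ℝ) ^ m * (2 / t) ^ m * rexp (t / 2 * ‖x‖ ^ 2) := by
        have := pow_le_pow_mul_exp m (v := t / 2 * ‖x‖ ^ 2) (by positivity)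
        have hrw : (t / 2 * ‖x‖ ^ 2) ^ m = (t / 2) ^ m * (‖x‖ ^ 2) ^ m := mul_pow _ _ _
        rw [hrw] at this
        have ht2 : (0:ℝ) < (t / 2) ^ m := by positivity
        calc (‖x‖ ^ 2) ^ m = (2 / t) ^ m * ((t / 2) ^ m * (‖x‖ ^ 2) ^ m) := by
              rw [← mul_assoc, ← mul_pow, show 2 / t * (t / 2) = 1 by field_simp [ht.ne'], one_pow, one_mul]
          _ ≤ (2 / t) ^ m * ((m:ℝ) ^ m * rexp (t / 2 * ‖x‖ ^ 2)) := by
              apply mul_le_mul_of_nonneg_left this (by positivity)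
          _ = (m:ℝ) ^ m * (2 / t) ^ m * rexp (t / 2 * ‖x‖ ^ 2) := by ring
      have hexp1 : (1:ℝ) ≤ rexp (t / 2 * ‖x‖ ^ 2) := Real.one_le_exp (by positivity)
      nlinarith
    have hnn : ‖(fun x : Vd => ‖x‖ ^ m * rexp (-t * ‖x‖ ^ 2)) x‖
        = ‖x‖ ^ m * rexp (-t * ‖x‖ ^ 2) := by
      simp only [norm_mul, norm_pow, norm_norm, Real.norm_eq_abs, abs_of_pos (Real.exp_pos _), abs_norm]
    rw [hnn]
    calc ‖x‖ ^ m * rexp (-t * ‖x‖ ^ 2)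
        ≤ ((1 + (m:ℝ) ^ m * (2 / t) ^ m) * rexp (t / 2 * ‖x‖ ^ 2)) * rexp (-t * ‖x‖ ^ 2) :=
          mul_le_mul_of_nonneg_right key (Real.exp_pos _).le
      _ = (1 + (m:ℝ) ^ m * (2 / t) ^ m) * rexp (-(t / 2) * ‖x‖ ^ 2) := by
          rw [mul_assoc, ← Real.exp_add]; ring_nf

variable (d) in
/-- integrand of the `k`-th moment Fourier integral -/
def jig (y : EuclideanSpace ℝ (Fin d)) (k : ℕ) (t : ℝ) (x : EuclideanSpace ℝ (Fin d)) : ℂ :=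
  Complex.exp (↑(-2 * π * ⟪x, y⟫) * Complex.I) *
    (((‖x‖ : ℂ) ^ 2) ^ k * Complex.exp (-(t : ℂ) * (‖x‖ : ℂ) ^ 2))

variable (d) in
def Jf (y : EuclideanSpace ℝ (Fin d)) (k : ℕ) (t : ℝ) : ℂ := ∫ x : Vd, jig d y k t x

lemma norm_jig (y : EuclideanSpace ℝ (Fin d)) (k : ℕ) (t : ℝ) (x : Vd) :
    ‖jig d y k t x‖ = ‖x‖ ^ (2 * k) * rexp (-t * ‖x‖ ^ 2) := by
  simp only [jig, norm_mul, Complex.norm_exp]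
  have h1 : ((↑(-2 * π * ⟪x, y⟫) * Complex.I)).re = 0 := by simp
  have h2 : ((-(t : ℂ) * (‖x‖ : ℂ) ^ 2)).re = -t * ‖x‖ ^ 2 := by
    simp [← Complex.ofReal_pow]
  rw [h1, h2, Real.exp_zero, one_mul, norm_pow, norm_pow]
  simp [pow_mul, Complex.norm_of_nonneg (norm_nonneg x)]

lemma continuous_jig (y : EuclideanSpace ℝ (Fin d)) (k : ℕ) (t : ℝ) :
    Continuous (jig d y k t) := by
  have c1 : Continuous fun x : Vd => ⟪x, y⟫ := continuous_id.inner continuous_const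
  have c2 : Continuous fun x : Vd => ((‖x‖ : ℂ)) :=
    Complex.continuous_ofReal.comp continuous_norm
  exact ((Complex.continuous_ofReal.comp (continuous_const.mul c1)).mul
    continuous_const).cexp.mul (((c2.pow 2).pow k).mul
      ((continuous_const.mul (c2.pow 2)).cexp))

lemma integrable_jig (y : EuclideanSpace ℝ (Fin d)) (k : ℕ) {t : ℝ} (ht : 0 < t) :
    Integrable (jig d y k t) := by
  refine (integrable_pow_gauss (2 * k) ht).mono'
    (continuous_jig y k t).aestronglyMeasurable ?_
  filter_upwards with x
  rw [norm_jig]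

lemma hasDerivAt_Jf (y : EuclideanSpace ℝ (Fin d)) (k : ℕ) {t : ℝ} (ht : 0 < t) :
    HasDerivAt (Jf d y k) (-(Jf d y (k + 1) t)) t := by
  have heps : (0:ℝ) < t / 2 := by linarith
  have hbound : ∀ᵐ (x : Vd) ∂volume, ∀ s ∈ Metric.ball t (t / 2),
      ‖-jig d y (k + 1) s x‖ ≤ ‖x‖ ^ (2 * (k + 1)) * rexp (-(t / 2) * ‖x‖ ^ 2) := by
    filter_upwards with x s hs
    rw [norm_neg, norm_jig]
    have hs2 : t / 2 ≤ s := by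
      rw [Metric.mem_ball, Real.dist_eq, abs_lt] at hs
      linarith
    have := Real.exp_le_exp.2 (by nlinarith [sq_nonneg ‖x‖] : -s * ‖x‖ ^ 2 ≤ -(t/2) * ‖x‖ ^ 2)
    exact mul_le_mul_of_nonneg_left this (by positivity)
  have hdiff : ∀ᵐ (x : Vd) ∂volume, ∀ s ∈ Metric.ball t (t / 2),
      HasDerivAt (fun s => jig d y k s x) (-jig d y (k + 1) s x) s := by
    filter_upwards with x s hs
    have hbase : HasDerivAt (fun s : ℝ => ((s : ℂ))) 1 s := by
      simpa using (hasDerivAt_id s).ofReal_comp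
    have h1 : HasDerivAt (fun s : ℝ => -(s : ℂ) * (‖x‖ : ℂ) ^ 2)
        (-((‖x‖ : ℂ) ^ 2)) s := by
      have := (hbase.mul_const ((‖x‖ : ℂ) ^ 2)).neg
      simp only [neg_mul, one_mul] at this ⊢
      exact this
    have h2 := h1.cexp
    have h3 := (h2.const_mul (((‖x‖ : ℂ) ^ 2) ^ k)).const_mul
        (Complex.exp (↑(-2 * π * ⟪x, y⟫) * Complex.I))
    refine h3.congr_deriv ?_
    · show _ = -jig d y (k + 1) s x
      unfold jig; ring
  have key := hasDerivAt_integral_of_dominated_loc_of_deriv_le (μ := volume)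
      (F := fun s (x : Vd) => jig d y k s x)
      (F' := fun s (x : Vd) => -jig d y (k + 1) s x)
      (x₀ := t) (s := Metric.ball t (t / 2))
      (bound := fun x : Vd => ‖x‖ ^ (2 * (k + 1)) * rexp (-(t / 2) * ‖x‖ ^ 2))
      (Metric.ball_mem_nhds t heps)
      (Filter.Eventually.of_forall fun s => (continuous_jig y k s).aestronglyMeasurable)
      (integrable_jig y k ht)
      ((continuous_jig y (k + 1) t).neg.aestronglyMeasurable)
      hbound (integrable_pow_gauss _ heps) hdiff
  have h := key.2
  rw [integral_neg] at h
  exact h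

section Formula

variable (d : ℕ) (y : EuclideanSpace ℝ (Fin d))

/-- abbreviations -/
def rr : ℝ := ‖y‖ ^ 2
def qq : ℝ := π ^ 2 * rr d y
def cc : ℝ := (d : ℝ) / 2

def Pf (t : ℝ) : ℝ := (π / t) ^ (cc d)
def Af (t : ℝ) : ℂ := (Pf d t : ℂ) * Complex.exp ((-(qq d y / t) : ℝ) : ℂ)
def gg (t : ℝ) : ℝ := qq d y / t ^ 2 - cc d / t
def gg1 (t : ℝ) : ℝ := -2 * qq d y / t ^ 3 + cc d / t ^ 2
def gg2 (t : ℝ) : ℝ := 6 * qq d y / t ^ 4 - 2 * cc d / t ^ 3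
def Bf (t : ℝ) : ℂ := Af d y t * (gg d y t : ℂ)
def Cf (t : ℝ) : ℂ := Af d y t * ((gg d y t ^ 2 + gg1 d y t : ℝ) : ℂ)
def Df (t : ℝ) : ℂ :=
  Af d y t * ((gg d y t ^ 3 + 3 * gg d y t * gg1 d y t + gg2 d y t : ℝ) : ℂ)

variable {d y}

lemma hasDerivAt_gg {t : ℝ} (ht : 0 < t) : HasDerivAt (gg d y) (gg1 d y t) t := by
  have h1 : HasDerivAt (fun t : ℝ => qq d y / t ^ 2)
      ((0 * t ^ 2 - qq d y * (2 * t ^ 1)) / (t ^ 2) ^ 2) t :=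
    (hasDerivAt_const t (qq d y)).div (hasDerivAt_pow 2 t) (by positivity)
  have h2 : HasDerivAt (fun t : ℝ => cc d / t)
      ((0 * t - cc d * 1) / t ^ 2) t :=
    (hasDerivAt_const t (cc d)).div (hasDerivAt_id t) (ne_of_gt ht)
  refine (h1.sub h2).congr_deriv ?_
  unfold gg1
  field_simp
  ring

lemma hasDerivAt_gg1 {t : ℝ} (ht : 0 < t) : HasDerivAt (gg1 d y) (gg2 d y t) t := by
  have h1 : HasDerivAt (fun t : ℝ => -2 * qq d y / t ^ 3)
      ((0 * t ^ 3 - -2 * qq d y * (3 * t ^ 2)) / (t ^ 3) ^ 2) t :=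
    (hasDerivAt_const t (-2 * qq d y)).div (hasDerivAt_pow 3 t) (by positivity)
  have h2 : HasDerivAt (fun t : ℝ => cc d / t ^ 2)
      ((0 * t ^ 2 - cc d * (2 * t ^ 1)) / (t ^ 2) ^ 2) t :=
    (hasDerivAt_const t (cc d)).div (hasDerivAt_pow 2 t) (by positivity)
  refine (h1.add h2).congr_deriv ?_
  unfold gg2
  field_simp
  ring

lemma hasDerivAt_Pf {t : ℝ} (ht : 0 < t) :
    HasDerivAt (Pf d) (Pf d t * (-(cc d) / t)) t := by
  have hq : (0:ℝ) < π / t := div_pos pi_pos ht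
  have h1 : HasDerivAt (fun t : ℝ => π / t) ((0 * t - π * 1) / t ^ 2) t :=
    (hasDerivAt_const t π).div (hasDerivAt_id t) (ne_of_gt ht)
  have h2 := h1.rpow_const (p := cc d) (Or.inl (ne_of_gt hq))
  refine (h2).congr_deriv ?_
  rw [Real.rpow_sub_one (ne_of_gt hq)]
  unfold Pf
  field_simp
  ring

lemma hasDerivAt_Af {t : ℝ} (ht : 0 < t) : HasDerivAt (Af d y) (Bf d y t) t := by
  have he : HasDerivAt (fun t : ℝ => -(qq d y / t))
      (-((0 * t - qq d y * 1) / t ^ 2)) t :=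
    ((hasDerivAt_const t (qq d y)).div (hasDerivAt_id t) (ne_of_gt ht)).neg
  have he' : HasDerivAt (fun t : ℝ => -(qq d y / t)) (qq d y / t ^ 2) t := by
    convert he using 1
    field_simp
    ring
  have hc : HasDerivAt (fun t : ℝ => ((-(qq d y / t) : ℝ) : ℂ))
      ((qq d y / t ^ 2 : ℝ) : ℂ) t := he'.ofReal_comp
  have hexp := hc.cexp
  have hp : HasDerivAt (fun t : ℝ => ((Pf d t : ℝ) : ℂ))
      ((Pf d t * (-(cc d) / t) : ℝ) : ℂ) t := (hasDerivAt_Pf ht).ofReal_comp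
  have hmul := hp.mul hexp
  refine (hmul).congr_deriv ?_
  unfold Bf Af gg
  have htne : (t : ℂ) ≠ 0 := by
    simpa using ne_of_gt ht
  push_cast
  field_simp
  ring

lemma hasDerivAt_Bf {t : ℝ} (ht : 0 < t) : HasDerivAt (Bf d y) (Cf d y t) t := by
  have h := (hasDerivAt_Af (y := y) ht).mul ((hasDerivAt_gg (y := y) ht).ofReal_comp)
  refine (h).congr_deriv ?_
  unfold Cf Bf
  push_cast
  ring

lemma hasDerivAt_Cf {t : ℝ} (ht : 0 < t) : HasDerivAt (Cf d y) (Df d y t) t := by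
  have hsum : HasDerivAt (fun t => gg d y t ^ 2 + gg1 d y t)
      (2 * gg d y t * gg1 d y t + gg2 d y t) t := by
    have := ((hasDerivAt_gg (y := y) ht).pow 2).add (hasDerivAt_gg1 (y := y) ht)
    refine (this).congr_deriv ?_
    push_cast
    ring
  have h := (hasDerivAt_Af (y := y) ht).mul hsum.ofReal_comp
  refine (h).congr_deriv ?_
  unfold Df Bf
  push_cast
  ring

lemma Jf_zero_eq {t : ℝ} (ht : 0 < t) : Jf d y 0 t = Af d y t := by
  have hb : (0:ℝ) < ((t : ℂ)).re := by simpa using ht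
  have hgauss := fourier_gaussian_innerProductSpace
    (V := EuclideanSpace ℝ (Fin d)) (b := (t : ℂ)) hb y
  have h0 : Jf d y 0 t
      = 𝓕 (fun v : EuclideanSpace ℝ (Fin d) => Complex.exp (-(t:ℂ) * (‖v‖ : ℂ) ^ 2)) y := by
    rw [Real.fourier_eq']
    unfold Jf jig
    refine integral_congr_ae (Filter.Eventually.of_forall fun x => ?_)
    simp [smul_eq_mul]
  rw [h0, hgauss]
  unfold Af Pf qq rr cc
  rw [Complex.ofReal_cpow (le_of_lt (div_pos pi_pos ht))]
  have hd : Module.finrank ℝ (EuclideanSpace ℝ (Fin d)) = d := finrank_euclideanSpace_fin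
  rw [hd]
  have htne : (t : ℂ) ≠ 0 := by simpa using ne_of_gt ht
  push_cast
  congr 1
  congr 1
  field_simp

lemma Jf_eventuallyEq_Af {t : ℝ} (ht : 0 < t) : Jf d y 0 =ᶠ[nhds t] Af d y :=
  Filter.eventuallyEq_of_mem (Ioi_mem_nhds ht) fun s hs => Jf_zero_eq hs

lemma Jf_one_eq {t : ℝ} (ht : 0 < t) : Jf d y 1 t = -Bf d y t := by
  have h2 : HasDerivAt (Jf d y 0) (Bf d y t) t :=
    (hasDerivAt_Af ht).congr_of_eventuallyEq (Jf_eventuallyEq_Af ht)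
  have h1 := hasDerivAt_Jf y 0 ht
  have h := h1.unique h2
  simpa [neg_eq_iff_eq_neg] using h

lemma Jf_one_eventuallyEq {t : ℝ} (ht : 0 < t) : Jf d y 1 =ᶠ[nhds t] fun s => -Bf d y s :=
  Filter.eventuallyEq_of_mem (Ioi_mem_nhds ht) fun s hs => Jf_one_eq hs

lemma Jf_two_eq {t : ℝ} (ht : 0 < t) : Jf d y 2 t = Cf d y t := by
  have h2 : HasDerivAt (Jf d y 1) (-(Cf d y t)) t :=
    ((hasDerivAt_Bf ht).neg).congr_of_eventuallyEq (Jf_one_eventuallyEq ht)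
  have h1 := hasDerivAt_Jf y 1 ht
  have h := h1.unique h2
  simpa using h

lemma Jf_two_eventuallyEq {t : ℝ} (ht : 0 < t) : Jf d y 2 =ᶠ[nhds t] Cf d y :=
  Filter.eventuallyEq_of_mem (Ioi_mem_nhds ht) fun s hs => Jf_two_eq hs

lemma Jf_three_eq {t : ℝ} (ht : 0 < t) : Jf d y 3 t = -Df d y t := by
  have h2 : HasDerivAt (Jf d y 2) (Df d y t) t :=
    (hasDerivAt_Cf ht).congr_of_eventuallyEq (Jf_two_eventuallyEq ht)
  have h1 := hasDerivAt_Jf y 2 ht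
  have h := h1.unique h2
  simpa [neg_eq_iff_eq_neg] using h

lemma Af_pi : Af d y π = Complex.exp ((-(π * ‖y‖ ^ 2) : ℝ) : ℂ) := by
  unfold Af Pf qq rr
  rw [div_self (ne_of_gt pi_pos), Real.one_rpow]
  have harg : -(π ^ 2 * ‖y‖ ^ 2 / π) = -(π * ‖y‖ ^ 2) := by
    field_simp
  rw [harg]
  simp

lemma eigen_plus (y : EuclideanSpace ℝ (Fin d)) :
    𝓕 (fun x : EuclideanSpace ℝ (Fin d) =>
        ((((2 * π * ‖x‖ ^ 2) ^ 2 - ((d : ℝ) + 2) * (2 * π * ‖x‖ ^ 2)) *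
          rexp (-π * ‖x‖ ^ 2) : ℝ) : ℂ)) y =
      ((((2 * π * ‖y‖ ^ 2) ^ 2 - ((d : ℝ) + 2) * (2 * π * ‖y‖ ^ 2)) *
          rexp (-π * ‖y‖ ^ 2) : ℝ) : ℂ) := by
  rw [Real.fourier_eq']
  have hsplit : ∀ x : EuclideanSpace ℝ (Fin d),
      Complex.exp (↑(-2 * π * ⟪x, y⟫) * Complex.I) •
        ((((2 * π * ‖x‖ ^ 2) ^ 2 - ((d : ℝ) + 2) * (2 * π * ‖x‖ ^ 2)) *
          rexp (-π * ‖x‖ ^ 2) : ℝ) : ℂ)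
      = ((4 * π ^ 2 : ℝ) : ℂ) * jig d y 2 π x
        + ((-(2 * ((d : ℝ) + 2) * π) : ℝ) : ℂ) * jig d y 1 π x := by
    intro x
    unfold jig
    rw [smul_eq_mul]
    push_cast [Complex.ofReal_exp]
    ring
  rw [integral_congr_ae (Filter.Eventually.of_forall hsplit)]
  rw [integral_add ((integrable_jig y 2 pi_pos).const_mul _)
      ((integrable_jig y 1 pi_pos).const_mul _), integral_const_mul, integral_const_mul]
  have h2 : ∫ x : EuclideanSpace ℝ (Fin d), jig d y 2 π x = Cf d y π := Jf_two_eq pi_pos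
  have h1 : ∫ x : EuclideanSpace ℝ (Fin d), jig d y 1 π x = -Bf d y π := Jf_one_eq pi_pos
  rw [h2, h1]
  unfold Cf Bf
  rw [Af_pi, ← Complex.ofReal_exp]
  unfold gg gg1 qq rr cc
  have hπ : (π : ℝ) ≠ 0 := ne_of_gt pi_pos
  norm_cast
  field_simp
  push_cast
  ring

lemma eigen_minus (y : EuclideanSpace ℝ (Fin d)) :
    𝓕 (fun x : EuclideanSpace ℝ (Fin d) =>
        (((2 * (2 * π * ‖x‖ ^ 2) ^ 3 - (3 * (d : ℝ) + 12) * (2 * π * ‖x‖ ^ 2) ^ 2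
            + ((d : ℝ) + 2) * ((d : ℝ) + 4) * (2 * π * ‖x‖ ^ 2)) *
          rexp (-π * ‖x‖ ^ 2) : ℝ) : ℂ)) y =
      -(((2 * (2 * π * ‖y‖ ^ 2) ^ 3 - (3 * (d : ℝ) + 12) * (2 * π * ‖y‖ ^ 2) ^ 2
            + ((d : ℝ) + 2) * ((d : ℝ) + 4) * (2 * π * ‖y‖ ^ 2)) *
          rexp (-π * ‖y‖ ^ 2) : ℝ) : ℂ) := by
  rw [Real.fourier_eq']
  have hsplit : ∀ x : EuclideanSpace ℝ (Fin d),
      Complex.exp (↑(-2 * π * ⟪x, y⟫) * Complex.I) •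
        (((2 * (2 * π * ‖x‖ ^ 2) ^ 3 - (3 * (d : ℝ) + 12) * (2 * π * ‖x‖ ^ 2) ^ 2
            + ((d : ℝ) + 2) * ((d : ℝ) + 4) * (2 * π * ‖x‖ ^ 2)) *
          rexp (-π * ‖x‖ ^ 2) : ℝ) : ℂ)
      = ((16 * π ^ 3 : ℝ) : ℂ) * jig d y 3 π x
        + (((-((3 * (d : ℝ) + 12) * 4 * π ^ 2) : ℝ) : ℂ) * jig d y 2 π x
        + ((((d : ℝ) + 2) * ((d : ℝ) + 4) * 2 * π : ℝ) : ℂ) * jig d y 1 π x) := by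
    intro x
    unfold jig
    rw [smul_eq_mul]
    push_cast [Complex.ofReal_exp]
    ring
  rw [integral_congr_ae (Filter.Eventually.of_forall hsplit)]
  have hg : Integrable (fun x : EuclideanSpace ℝ (Fin d) =>
      ((-((3 * (d : ℝ) + 12) * 4 * π ^ 2) : ℝ) : ℂ) * jig d y 2 π x
        + ((((d : ℝ) + 2) * ((d : ℝ) + 4) * 2 * π : ℝ) : ℂ) * jig d y 1 π x) :=
    ((integrable_jig y 2 pi_pos).const_mul _).add ((integrable_jig y 1 pi_pos).const_mul _)
  rw [integral_add ((integrable_jig y 3 pi_pos).const_mul _) hg,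
    integral_add ((integrable_jig y 2 pi_pos).const_mul _)
      ((integrable_jig y 1 pi_pos).const_mul _),
    integral_const_mul, integral_const_mul, integral_const_mul]
  have h3 : ∫ x : EuclideanSpace ℝ (Fin d), jig d y 3 π x = -Df d y π := Jf_three_eq pi_pos
  have h2 : ∫ x : EuclideanSpace ℝ (Fin d), jig d y 2 π x = Cf d y π := Jf_two_eq pi_pos
  have h1 : ∫ x : EuclideanSpace ℝ (Fin d), jig d y 1 π x = -Bf d y π := Jf_one_eq pi_pos
  rw [h3, h2, h1]
  unfold Df Cf Bf
  rw [Af_pi, ← Complex.ofReal_exp]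
  unfold gg gg1 gg2 qq rr cc
  have hπ : (π : ℝ) ≠ 0 := ne_of_gt pi_pos
  norm_cast
  field_simp
  push_cast
  ring

end Formula

end D3UB

namespace D3UB

lemma norm_sq_large {d : ℕ} {x : EuclideanSpace ℝ (Fin d)}
    (hx : Real.sqrt (((d:ℝ) + 6) / (2 * π)) ≤ ‖x‖) : (d:ℝ) + 6 ≤ 2 * π * ‖x‖ ^ 2 := by
  have h2π : (0:ℝ) < 2 * π := by positivity
  have hnn : (0:ℝ) ≤ ((d:ℝ) + 6) / (2 * π) := by positivity
  have hs := Real.sq_sqrt hnn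
  have h1 : ((d:ℝ) + 6) / (2 * π) ≤ ‖x‖ ^ 2 := by
    nlinarith [Real.sqrt_nonneg (((d:ℝ) + 6) / (2 * π))]
  rw [div_le_iff₀ h2π] at h1
  nlinarith

lemma sqrt_mem_plus (d : ℕ) :
    Real.sqrt (((d:ℝ) + 6) / (2 * π)) ∈ {ρ : ℝ | 0 ≤ ρ ∧ ∃ p : Polynomial ℝ, p ≠ 0 ∧
      p.natDegree ≤ 3 ∧
    (∀ y : EuclideanSpace ℝ (Fin d),
      𝓕 (fun x : EuclideanSpace ℝ (Fin d) =>
          ((p.eval (2 * π * ‖x‖ ^ 2) * Real.exp (-π * ‖x‖ ^ 2) : ℝ) : ℂ)) y =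
        ((1:ℝ) : ℂ) * ((p.eval (2 * π * ‖y‖ ^ 2) * Real.exp (-π * ‖y‖ ^ 2) : ℝ) : ℂ)) ∧
    p.eval 0 = 0 ∧
    ∀ x : EuclideanSpace ℝ (Fin d), Real.sqrt (((d:ℝ) + 6) / (2 * π)) ≤ ‖x‖ →
      0 ≤ p.eval (2 * π * ‖x‖ ^ 2)} := by
  have heval : ∀ w : ℝ, (X ^ 2 - C ((d:ℝ) + 2) * X).eval w = w ^ 2 - ((d:ℝ) + 2) * w := by
    intro w; simp
  refine ⟨Real.sqrt_nonneg _, X ^ 2 - C ((d:ℝ) + 2) * X, ?_, ?_, ?_, ?_, ?_⟩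
  · intro h
    have h1 := heval (-1)
    rw [h] at h1
    simp only [eval_zero] at h1
    nlinarith [Nat.cast_nonneg (α := ℝ) d]
  · compute_degree!
  · intro y
    simp only [heval]
    rw [Complex.ofReal_one, one_mul]
    exact eigen_plus y
  · simp
  · intro x hx
    rw [heval]
    have hw := norm_sq_large hx
    nlinarith [Nat.cast_nonneg (α := ℝ) d, sq_nonneg ‖x‖]

lemma sqrt_mem_minus (d : ℕ) :
    Real.sqrt (((d:ℝ) + 6) / (2 * π)) ∈ {ρ : ℝ | 0 ≤ ρ ∧ ∃ p : Polynomial ℝ, p ≠ 0 ∧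
      p.natDegree ≤ 3 ∧
    (∀ y : EuclideanSpace ℝ (Fin d),
      𝓕 (fun x : EuclideanSpace ℝ (Fin d) =>
          ((p.eval (2 * π * ‖x‖ ^ 2) * Real.exp (-π * ‖x‖ ^ 2) : ℝ) : ℂ)) y =
        ((-1:ℝ) : ℂ) * ((p.eval (2 * π * ‖y‖ ^ 2) * Real.exp (-π * ‖y‖ ^ 2) : ℝ) : ℂ)) ∧
    p.eval 0 = 0 ∧
    ∀ x : EuclideanSpace ℝ (Fin d), Real.sqrt (((d:ℝ) + 6) / (2 * π)) ≤ ‖x‖ →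
      0 ≤ p.eval (2 * π * ‖x‖ ^ 2)} := by
  have heval : ∀ w : ℝ,
      (C 2 * X ^ 3 - C (3 * (d:ℝ) + 12) * X ^ 2 + C (((d:ℝ) + 2) * ((d:ℝ) + 4)) * X).eval w
        = 2 * w ^ 3 - (3 * (d:ℝ) + 12) * w ^ 2 + ((d:ℝ) + 2) * ((d:ℝ) + 4) * w := by
    intro w; simp
  refine ⟨Real.sqrt_nonneg _,
    C 2 * X ^ 3 - C (3 * (d:ℝ) + 12) * X ^ 2 + C (((d:ℝ) + 2) * ((d:ℝ) + 4)) * X,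
    ?_, ?_, ?_, ?_, ?_⟩
  · intro h
    have h1 := heval (-1)
    rw [h] at h1
    simp only [eval_zero] at h1
    nlinarith [Nat.cast_nonneg (α := ℝ) d]
  · compute_degree
  · intro y
    simp only [heval]
    rw [show ((-1:ℝ) : ℂ) = -1 by norm_cast, neg_one_mul]
    exact eigen_minus y
  · simp
  · intro x hx
    rw [heval]
    have hw := norm_sq_large hx
    have hw0 : (0:ℝ) ≤ 2 * π * ‖x‖ ^ 2 := by positivity
    have hd0 : (0:ℝ) ≤ (d:ℝ) := Nat.cast_nonneg d
    nlinarith [mul_nonneg hw0 (sq_nonneg (2 * π * ‖x‖ ^ 2 - (d:ℝ) - 6)),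
      mul_nonneg (mul_nonneg hw0 (by linarith : (0:ℝ) ≤ 2 * π * ‖x‖ ^ 2 - ((d:ℝ) + 6)))
        (by linarith : (0:ℝ) ≤ (d:ℝ) + 12)]

lemma rhoOpt_le_sqrt (d : ℕ) {s : ℝ} (hs : s = 1 ∨ s = -1) :
    rhoOpt d 3 s ≤ Real.sqrt (((d:ℝ) + 6) / (2 * π)) := by
  apply csInf_le ⟨0, fun ρ hρ => hρ.1⟩
  rcases hs with rfl | rfl
  · exact sqrt_mem_plus d
  · exact sqrt_mem_minus d

lemma rhoOpt_nonneg (d n : ℕ) (s : ℝ) : 0 ≤ rhoOpt d n s :=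
  Real.sInf_nonneg fun _ hρ => hρ.1

end D3UB

theorem degree_three_upper_bound (s : ℝ) (hs : s = 1 ∨ s = -1) :
    Filter.limsup (fun d : ℕ => rhoOpt d 3 s / Real.sqrt ((d : ℝ) / (2 * π))) atTop ≤ 1 := by
  set f : ℕ → ℝ := fun d => rhoOpt d 3 s / Real.sqrt ((d : ℝ) / (2 * π)) with hf
  set g : ℕ → ℝ := fun d => Real.sqrt (((d:ℝ) + 6) / (2 * π)) / Real.sqrt ((d : ℝ) / (2 * π))
    with hgdef
  have hfg : ∀ᶠ d in atTop, f d ≤ g d := by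
    filter_upwards with d
    simp only [hf, hgdef]
    rcases eq_or_ne (Real.sqrt ((d : ℝ) / (2 * π))) 0 with h0 | h0
    · rw [h0, div_zero, div_zero]
    · have hpos : 0 < Real.sqrt ((d : ℝ) / (2 * π)) :=
        lt_of_le_of_ne (Real.sqrt_nonneg _) (Ne.symm h0)
      exact div_le_div_of_nonneg_right (D3UB.rhoOpt_le_sqrt d hs) hpos.le
  have hgt : Tendsto g atTop (𝓝 1) := by
    have h1 : Tendsto (fun d : ℕ => 1 + 6 / (d:ℝ)) atTop (𝓝 1) := by
      simpa using tendsto_const_nhds.add (tendsto_const_div_atTop_nhds_zero_nat (6:ℝ))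
    have h2 : Tendsto (fun d : ℕ => Real.sqrt (1 + 6 / (d:ℝ))) atTop (𝓝 1) := by
      have := (Real.continuous_sqrt.tendsto 1).comp h1
      simpa [Function.comp_def] using this
    refine h2.congr' ?_
    filter_upwards [eventually_ge_atTop 1] with d hd
    have hd0 : (0:ℝ) < (d:ℝ) := by exact_mod_cast hd
    have hπ : (0:ℝ) < 2 * π := by positivity
    show Real.sqrt (1 + 6 / (d:ℝ))
      = Real.sqrt (((d:ℝ) + 6) / (2 * π)) / Real.sqrt ((d:ℝ) / (2 * π))
    rw [← Real.sqrt_div (by positivity : (0:ℝ) ≤ ((d:ℝ) + 6) / (2 * π))]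
    congr 1
    rw [div_div_div_cancel_right₀]
    · field_simp
    · positivity
  have hgb : IsBoundedUnder (· ≤ ·) atTop g := hgt.isBoundedUnder_le
  have hcob : IsCoboundedUnder (· ≤ ·) atTop f :=
    isCoboundedUnder_le_of_le atTop (x := 0) fun d =>
      div_nonneg (D3UB.rhoOpt_nonneg d 3 s) (Real.sqrt_nonneg _)
  calc Filter.limsup f atTop ≤ Filter.limsup g atTop := limsup_le_limsup hfg hcob hgb
    _ = 1 := hgt.limsup_eq
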